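/- Let q ∈ 𝕀 be primitive and admissible. Then there exists α_q ∈ 𝔬 such that α_q²·nr(q)·𝔬 = nr(q)𝔬 ∩ nr(q)'𝔬 as ideals of 𝔬; in other words, the fractional 𝔬-ideal (nr(q)𝔬 ∩ nr(q)'𝔬)·(nr(q)𝔬)⁻¹ is the square of a principal integral ideal of 𝔬. -/

import Mathlib

noncomputable section

open Quaternion Classical

/-- √5 as a real number. -/
def sqrt5 : ℝ := Real.sqrt 5

/-- The golden ratio τ = (1+√5)/2. -/
def gold : ℝ := (1 + sqrt5) / 2

/-- membership in K = ℚ(√5) ⊆ ℝ. -/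
def inK (x : ℝ) : Prop := ∃ a b : ℚ, x = (a : ℝ) + (b : ℝ) * sqrt5

/-- The nontrivial field automorphism of K = ℚ(√5) (√5 ↦ -√5), extended by the
identity outside K.  Since `1, √5` are linearly independent over ℚ, the rational
coordinates of an element of K are unique, so this is well defined. -/
noncomputable def conjK (x : ℝ) : ℝ :=
  if h : ∃ a b : ℚ, x = (a : ℝ) + (b : ℝ) * sqrt5 then
    (h.choose : ℝ) - (h.choose_spec.choose : ℝ) * sqrt5
  else x

/-- membership in 𝔬 = ℤ[τ], the ring of integers of ℚ(√5). -/
def inO (x : ℝ) : Prop := ∃ m n : ℤ, x = (m : ℝ) + (n : ℝ) * gold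

/-- The twist map (a,b,c,d) ↦ (a',b',d',c') on quaternions. -/
noncomputable def twist (q : ℍ[ℝ]) : ℍ[ℝ] :=
  ⟨conjK q.re, conjK q.imI, conjK q.imK, conjK q.imJ⟩

/-- reduced norm nr(q) = q q̄ (as a real number). -/
def nr (q : ℍ[ℝ]) : ℝ := (q * star q).re

/-- reduced trace tr(q) = q + q̄ (as a real number). -/
def trq (q : ℍ[ℝ]) : ℝ := (q + star q).re

/-- generators of the icosian ring. -/
def e₁ : ℍ[ℝ] := ⟨1, 0, 0, 0⟩
def e₂ : ℍ[ℝ] := ⟨0, 1, 0, 0⟩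
def e₃ : ℍ[ℝ] := ⟨1/2, 1/2, 1/2, 1/2⟩
def e₄ : ℍ[ℝ] := ⟨(1 - gold)/2, gold/2, 0, 1/2⟩

/-- membership in the icosian ring 𝕀, the 𝔬-span of the four generators. -/
def inI (q : ℍ[ℝ]) : Prop :=
  ∃ c₁ c₂ c₃ c₄ : ℝ, inO c₁ ∧ inO c₂ ∧ inO c₃ ∧ inO c₄ ∧
    q = c₁ • e₁ + c₂ • e₂ + c₃ • e₃ + c₄ • e₄

/-- generators of the copy L of the root lattice A₄. -/
def g₁ : ℍ[ℝ] := ⟨1, 0, 0, 0⟩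
def g₂ : ℍ[ℝ] := ⟨-1/2, 1/2, 1/2, 1/2⟩
def g₃ : ℍ[ℝ] := ⟨0, -1, 0, 0⟩
def g₄ : ℍ[ℝ] := ⟨0, 1/2, (gold - 1)/2, -gold/2⟩

/-- L, the ℤ-span of the four generators, as an additive subgroup of ℍ(ℝ). -/
def Lgrp : AddSubgroup ℍ[ℝ] := AddSubgroup.closure {g₁, g₂, g₃, g₄}

/-- `q` is a primitive icosian. -/
def PrimitiveIcosian (q : ℍ[ℝ]) : Prop :=
  inI q ∧ ∀ α : ℝ, inK α → inI (α • q) → inO α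

/-- `q` is admissible with |q q̃| = n. -/
def Admissible (q : ℍ[ℝ]) (n : ℕ) : Prop :=
  nr q * conjK (nr q) = (n : ℝ) ^ 2

/-- The additive map x ↦ r • (q x q̃) on ℍ(ℝ). -/
noncomputable def rotHom (q : ℍ[ℝ]) (r : ℝ) : ℍ[ℝ] →+ ℍ[ℝ] where
  toFun x := r • (q * x * twist q)
  map_zero' := by simp
  map_add' x y := by
    simp [mul_add, add_mul, smul_add]

/-- Commensurateness of two additive subgroups of ℍ(ℝ). -/
def Commensurate (A B : AddSubgroup ℍ[ℝ]) : Prop :=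
  (A ⊓ B).relIndex A ≠ 0 ∧ (A ⊓ B).relIndex B ≠ 0

/-- Image of an additive subgroup under a linear isometry of ℍ(ℝ) ≅ ℝ⁴. -/
def mapIso (R : ℍ[ℝ] ≃ₗᵢ[ℝ] ℍ[ℝ]) (A : AddSubgroup ℍ[ℝ]) : AddSubgroup ℍ[ℝ] :=
  A.map (R.toLinearEquiv.toLinearMap.toAddMonoidHom)

/-- `R` lies in SO(4,ℝ). -/
def IsRotation (R : ℍ[ℝ] ≃ₗᵢ[ℝ] ℍ[ℝ]) : Prop :=
  LinearMap.det (R.toLinearEquiv.toLinearMap) = 1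


/-!
The reduced norm `N` of an icosian lies in `𝔬 = ℤ[τ]`, which is norm-Euclidean and hence
factorial, and admissibility says that `N N'` is a square `n²`. With `g = gcd(N, N')`, `N = gA`,
`N' = gB`, the coprime elements `A`, `B` have square product `(n/g)²`, so `B` is a unit times a
square `d²`. Then `lcm(N, N') ∼ N B ∼ d² N`, and `N𝔬 ∩ N'𝔬 = lcm(N, N')𝔬 = d² N 𝔬`.
-/
lemma exists_sq_mul_associated_lcm_of_mul_eq_sq {α : Type*} [CommMonoidWithZero α]
    [UniqueFactorizationMonoid α] [GCDMonoid α] {a b c : α} (h : a * b = c ^ 2) :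
    ∃ d : α, Associated (d ^ 2 * a) (lcm a b) := by
  set g := gcd a b with hg_def
  rcases eq_or_ne g 0 with hg | hg
  · obtain rfl : a = 0 := ((gcd_eq_zero_iff a b).mp hg).1
    exact ⟨0, by simp⟩
  obtain ⟨a', ha'⟩ : g ∣ a := gcd_dvd_left a b
  obtain ⟨b', hb'⟩ : g ∣ b := gcd_dvd_right a b
  have hcoprime : IsUnit (gcd b' a') := by
    have h := gcd_mul_left' g b' a'
    rw [← ha', ← hb'] at h
    exact isUnit_of_associated_mul (h.symm.trans (gcd_comm' b a)) hg
  obtain ⟨e, he⟩ : g ∣ c := by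
    rw [← UniqueFactorizationMonoid.pow_dvd_pow_iff_dvd two_ne_zero, ← h, ha', hb', sq,
      mul_mul_mul_comm]
    exact dvd_mul_right _ _
  have hsq : b' * a' = e ^ 2 := by
    refine mul_left_cancel₀ (pow_ne_zero 2 hg) ?_
    rw [← mul_pow, ← he, ← h, ha', hb', sq, mul_mul_mul_comm]
    exact mul_comm _ _
  obtain ⟨d, hd⟩ := exists_associated_pow_of_mul_eq_pow hcoprime hsq
  refine ⟨d, (hd.mul_right a).trans ?_⟩
  have hlcm : Associated (g * lcm a b) (g * (b' * a)) := by
    rw [← mul_assoc, ← hb', mul_comm b, hg_def]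
    exact gcd_mul_lcm a b
  exact (Associated.of_mul_left hlcm (.refl g) hg).symm

lemma Irrational.eq_and_eq_of_add_mul_eq {r : ℝ} (hr : Irrational r) {a b a' b' : ℚ}
    (h : a + b * r = a' + b' * r) : a = a' ∧ b = b' := by
  have hb : b = b' := by
    by_contra hne
    have hne' : (b : ℝ) - b' ≠ 0 := sub_ne_zero.mpr (by exact_mod_cast hne)
    refine hr ⟨(a' - a) / (b - b'), ?_⟩
    push_cast
    rw [div_eq_iff hne']
    linear_combination -h
  subst hb
  exact ⟨by exact_mod_cast add_right_cancel h, rfl⟩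

lemma gold_sq : gold ^ 2 = gold + 1 := Real.goldenRatio_sq

lemma gold_irrational : Irrational gold := Real.goldenRatio_irrational

lemma sqrt5_irrational : Irrational sqrt5 := by
  simpa [sqrt5] using Nat.prime_five.irrational_sqrt

lemma two_mul_abs_sub_mul_round_div_le (a : ℤ) {n : ℤ} (hn : n ≠ 0) :
    2 * |a - n * round ((a : ℚ) / n)| ≤ |n| := by
  have hround := abs_sub_round ((a : ℚ) / n)
  have hcast : ((a - n * round ((a : ℚ) / n) : ℤ) : ℚ) =
      n * ((a : ℚ) / n - round ((a : ℚ) / n)) := by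
    push_cast; field_simp
  have : (2 * |((a - n * round ((a : ℚ) / n) : ℤ) : ℚ)| : ℚ) ≤ |(n : ℚ)| := by
    rw [hcast, abs_mul]; nlinarith [abs_nonneg (n : ℚ)]
  exact_mod_cast this

lemma abs_sq_add_mul_sub_sq_lt {s t n : ℤ} (hn : n ≠ 0) (hs : 2 * |s| ≤ |n|)
    (ht : 2 * |t| ≤ |n|) : |s ^ 2 + s * t - t ^ 2| < n ^ 2 := by
  have hn' : 0 < |n| := abs_pos.mpr hn
  rw [← sq_abs n, ← sq_abs s, ← sq_abs t] at *
  have hst : |s * t| ≤ |s| * |t| := (abs_mul s t).le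
  rw [abs_lt]
  constructor <;> nlinarith [abs_nonneg s, abs_nonneg t, neg_abs_le (s * t), le_abs_self (s * t)]


/-- The golden integer `a + b τ`. -/
@[ext] structure GoldenInt where
  a : ℤ
  b : ℤ

namespace GoldenInt

instance : Zero GoldenInt := ⟨⟨0, 0⟩⟩
instance : One GoldenInt := ⟨⟨1, 0⟩⟩
instance : Add GoldenInt := ⟨fun x y => ⟨x.a + y.a, x.b + y.b⟩⟩
instance : Neg GoldenInt := ⟨fun x => ⟨-x.a, -x.b⟩⟩
instance : Sub GoldenInt := ⟨fun x y => ⟨x.a - y.a, x.b - y.b⟩⟩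
-- `τ² = τ + 1`
instance : Mul GoldenInt :=
  ⟨fun x y => ⟨x.a * y.a + x.b * y.b, x.a * y.b + x.b * y.a + x.b * y.b⟩⟩

@[simp] lemma zero_a : (0 : GoldenInt).a = 0 := rfl
@[simp] lemma zero_b : (0 : GoldenInt).b = 0 := rfl
@[simp] lemma one_a : (1 : GoldenInt).a = 1 := rfl
@[simp] lemma one_b : (1 : GoldenInt).b = 0 := rfl
@[simp] lemma add_a (x y : GoldenInt) : (x + y).a = x.a + y.a := rfl
@[simp] lemma add_b (x y : GoldenInt) : (x + y).b = x.b + y.b := rfl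
@[simp] lemma neg_a (x : GoldenInt) : (-x).a = -x.a := rfl
@[simp] lemma neg_b (x : GoldenInt) : (-x).b = -x.b := rfl
@[simp] lemma sub_a (x y : GoldenInt) : (x - y).a = x.a - y.a := rfl
@[simp] lemma sub_b (x y : GoldenInt) : (x - y).b = x.b - y.b := rfl
@[simp] lemma mul_a (x y : GoldenInt) : (x * y).a = x.a * y.a + x.b * y.b := rfl
@[simp] lemma mul_b (x y : GoldenInt) : (x * y).b = x.a * y.b + x.b * y.a + x.b * y.b := rfl

instance : CommRing GoldenInt where
  add_assoc x y z := by ext <;> simp <;> ring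
  zero_add x := by ext <;> simp
  add_zero x := by ext <;> simp
  add_comm x y := by ext <;> simp <;> ring
  mul_assoc x y z := by ext <;> simp <;> ring
  one_mul x := by ext <;> simp
  mul_one x := by ext <;> simp
  left_distrib x y z := by ext <;> simp <;> ring
  right_distrib x y z := by ext <;> simp <;> ring
  mul_comm x y := by ext <;> simp <;> ring
  zero_mul x := by ext <;> simp
  mul_zero x := by ext <;> simp
  sub_eq_add_neg x y := by ext <;> simp <;> ring
  neg_add_cancel x := by ext <;> simp
  nsmul := nsmulRec
  zsmul := zsmulRec

def toReal : GoldenInt →+* ℝ where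
  toFun x := x.a + x.b * gold
  map_one' := by simp
  map_zero' := by simp
  map_add' x y := by simp; ring
  map_mul' x y := by
    simp only [mul_a, mul_b]
    push_cast
    linear_combination (-(x.b * y.b) : ℝ) * gold_sq

lemma toReal_apply (x : GoldenInt) : toReal x = x.a + x.b * gold := rfl

lemma toReal_injective : Function.Injective toReal := by
  intro x y h
  have h' : ((x.a : ℚ) : ℝ) + ((x.b : ℚ) : ℝ) * gold =
      ((y.a : ℚ) : ℝ) + ((y.b : ℚ) : ℝ) * gold := by
    push_cast; exact h
  obtain ⟨ha, hb⟩ := gold_irrational.eq_and_eq_of_add_mul_eq h'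
  ext
  · exact_mod_cast ha
  · exact_mod_cast hb

instance : IsDomain GoldenInt := toReal_injective.isDomain toReal

lemma inO_iff_exists_toReal {x : ℝ} : inO x ↔ ∃ z : GoldenInt, toReal z = x :=
  ⟨fun ⟨m, n, hx⟩ => ⟨⟨m, n⟩, hx.symm⟩, fun ⟨z, hz⟩ => ⟨z.a, z.b, hz.symm⟩⟩

lemma inO_toReal (z : GoldenInt) : inO (toReal z) := inO_iff_exists_toReal.mpr ⟨z, rfl⟩

/-- The Galois conjugation `τ ↦ 1 - τ`. -/
def conj : GoldenInt →+* GoldenInt where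
  toFun x := ⟨x.a + x.b, -x.b⟩
  map_one' := by ext <;> simp
  map_zero' := by ext <;> simp
  map_add' x y := by ext <;> simp <;> ring
  map_mul' x y := by ext <;> simp <;> ring

@[simp] lemma conj_a (x : GoldenInt) : (conj x).a = x.a + x.b := rfl
@[simp] lemma conj_b (x : GoldenInt) : (conj x).b = -x.b := rfl

@[simp] lemma conj_conj (x : GoldenInt) : conj (conj x) = x := by
  ext <;> simp

def norm (x : GoldenInt) : ℤ := x.a ^ 2 + x.a * x.b - x.b ^ 2

lemma norm_mul (x y : GoldenInt) : norm (x * y) = norm x * norm y := by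
  simp only [norm, mul_a, mul_b]; ring

lemma norm_conj (x : GoldenInt) : norm (conj x) = norm x := by
  simp only [norm, conj_a, conj_b]; ring

lemma mul_conj_self (x : GoldenInt) : x * conj x = ⟨norm x, 0⟩ := by
  ext <;> simp [norm] <;> ring

lemma norm_eq_zero {x : GoldenInt} : norm x = 0 ↔ x = 0 := by
  refine ⟨fun h => ?_, fun h => by simp [h, norm]⟩
  have h0 : toReal x * toReal (conj x) = 0 := by
    rw [← map_mul, mul_conj_self, h]; exact map_zero toReal
  rcases mul_eq_zero.mp h0 with hx | hx
  · exact toReal_injective (hx.trans (map_zero toReal).symm)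
  · rw [← conj_conj x, toReal_injective (hx.trans (map_zero toReal).symm), map_zero]

/-- Division rounded to the nearest golden integer, computed as `x conj(y) / norm y`. -/
def roundDiv (x y : GoldenInt) : GoldenInt :=
  ⟨round (((x * conj y).a : ℚ) / norm y), round (((x * conj y).b : ℚ) / norm y)⟩

lemma roundDiv_zero (x : GoldenInt) : roundDiv x 0 = 0 := by
  ext <;> simp [roundDiv, norm]

lemma natAbs_norm_sub_mul_roundDiv_lt (x : GoldenInt) {y : GoldenInt} (hy : y ≠ 0) :
    (norm (x - y * roundDiv x y)).natAbs < (norm y).natAbs := by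
  set p := x * conj y
  set N := norm y
  have hN : N ≠ 0 := mt norm_eq_zero.mp hy
  have hrem : (x - y * roundDiv x y) * conj y =
      ⟨p.a - N * (roundDiv x y).a, p.b - N * (roundDiv x y).b⟩ := by
    rw [sub_mul, mul_right_comm, mul_conj_self]
    ext <;> simp [p, N]
  have hlt := abs_sq_add_mul_sub_sq_lt hN (two_mul_abs_sub_mul_round_div_le p.a hN)
    (two_mul_abs_sub_mul_round_div_le p.b hN)
  have hnorm : norm (x - y * roundDiv x y) * N =
      norm ⟨p.a - N * (roundDiv x y).a, p.b - N * (roundDiv x y).b⟩ := by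
    rw [← hrem, norm_mul, norm_conj]
  have hmul : |norm (x - y * roundDiv x y)| * |N| < |N| * |N| := by
    rw [← abs_mul, hnorm, ← abs_mul, ← sq, abs_sq]
    exact hlt
  have := lt_of_mul_lt_mul_right hmul (abs_nonneg N)
  rw [Int.abs_eq_natAbs, Int.abs_eq_natAbs] at this
  exact_mod_cast this

instance : EuclideanDomain GoldenInt where
  quotient := roundDiv
  quotient_zero := roundDiv_zero
  remainder x y := x - y * roundDiv x y
  quotient_mul_add_remainder_eq x y := add_sub_cancel _ _
  r x y := (norm x).natAbs < (norm y).natAbs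
  r_wellFounded := (measure fun x => (norm x).natAbs).wf
  remainder_lt x _ hy := natAbs_norm_sub_mul_roundDiv_lt x hy
  mul_left_not_lt x y hy := by
    rw [norm_mul, Int.natAbs_mul, not_lt]
    exact Nat.le_mul_of_pos_right _ (Int.natAbs_pos.mpr (mt norm_eq_zero.mp hy))

instance : GCDMonoid GoldenInt := UniqueFactorizationMonoid.toGCDMonoid _

lemma setOf_eq_image_span (z : GoldenInt) :
    {x : ℝ | ∃ c : ℝ, inO c ∧ x = toReal z * c} = toReal '' (Ideal.span {z} : Set GoldenInt) := by
  ext x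
  simp only [Set.mem_ofPred_eq, Set.mem_image, SetLike.mem_coe, Ideal.mem_span_singleton']
  constructor
  · rintro ⟨c, hc, rfl⟩
    obtain ⟨w, rfl⟩ := inO_iff_exists_toReal.mp hc
    exact ⟨w * z, ⟨w, rfl⟩, by rw [map_mul, mul_comm]⟩
  · rintro ⟨_, ⟨w, rfl⟩, rfl⟩
    exact ⟨toReal w, inO_toReal w, by rw [map_mul, mul_comm]⟩

end GoldenInt

open GoldenInt

lemma conjK_rat_add_mul_sqrt5 (a b : ℚ) : conjK (a + b * sqrt5) = a - b * sqrt5 := by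
  have hK : ∃ a' b' : ℚ, (a : ℝ) + b * sqrt5 = a' + b' * sqrt5 := ⟨a, b, rfl⟩
  obtain ⟨ha, hb⟩ := sqrt5_irrational.eq_and_eq_of_add_mul_eq hK.choose_spec.choose_spec.symm
  rw [conjK, dif_pos hK]
  exact congrArg₂ (fun a b : ℚ => (a : ℝ) - b * sqrt5) ha hb

lemma conjK_toReal (z : GoldenInt) : conjK (toReal z) = toReal (conj z) := by
  have hz : toReal z = ((z.a + z.b / 2 : ℚ) : ℝ) + ((z.b / 2 : ℚ) : ℝ) * sqrt5 := by
    rw [toReal_apply, gold]; push_cast; ring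
  rw [hz, conjK_rat_add_mul_sqrt5, toReal_apply, conj_a, conj_b, gold]
  push_cast; ring

lemma exists_nr_eq_toReal {q : ℍ[ℝ]} (hq : inI q) : ∃ N : GoldenInt, nr q = toReal N := by
  obtain ⟨c₁, c₂, c₃, c₄, h₁, h₂, h₃, h₄, rfl⟩ := hq
  obtain ⟨z₁, rfl⟩ := inO_iff_exists_toReal.mp h₁
  obtain ⟨z₂, rfl⟩ := inO_iff_exists_toReal.mp h₂
  obtain ⟨z₃, rfl⟩ := inO_iff_exists_toReal.mp h₃
  obtain ⟨z₄, rfl⟩ := inO_iff_exists_toReal.mp h₄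
  let τ : GoldenInt := ⟨0, 1⟩
  have hτ : toReal τ = gold := by simp [τ, toReal_apply]
  refine ⟨z₁ ^ 2 + z₂ ^ 2 + z₃ ^ 2 + z₄ ^ 2 + z₁ * z₃ + (1 - τ) * z₁ * z₄ + z₂ * z₃
    + τ * z₂ * z₄ + z₃ * z₄, ?_⟩
  rw [nr, ← Quaternion.normSq_def, Quaternion.normSq_def']
  simp only [map_add, map_mul, map_sub, map_pow, map_one, hτ]
  simp only [Quaternion.re_add, Quaternion.imI_add, Quaternion.imJ_add, Quaternion.imK_add,
    Quaternion.re_smul, Quaternion.imI_smul, Quaternion.imJ_smul, Quaternion.imK_smul]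
  simp [e₁, e₂, e₃, e₄]
  linear_combination (toReal z₄ ^ 2 / 2) * gold_sq

theorem exists_extension_factor (q : ℍ[ℝ]) (hprim : PrimitiveIcosian q)
    (hadm : ∃ n : ℕ, Admissible q n) :
    ∃ α : ℝ, inO α ∧
      {x : ℝ | ∃ c : ℝ, inO c ∧ x = α ^ 2 * nr q * c} =
        {x : ℝ | ∃ c : ℝ, inO c ∧ x = nr q * c} ∩
          {x : ℝ | ∃ c : ℝ, inO c ∧ x = conjK (nr q) * c} := by
  obtain ⟨N, hN⟩ := exists_nr_eq_toReal hprim.1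
  obtain ⟨n, hn⟩ := hadm
  have hconj : conjK (nr q) = toReal (conj N) := by rw [hN, conjK_toReal]
  have hsq : N * conj N = (n : GoldenInt) ^ 2 := toReal_injective <| by
    rw [map_mul, map_pow, map_natCast, ← hN, ← hconj]
    exact hn
  obtain ⟨d, hd⟩ := exists_sq_mul_associated_lcm_of_mul_eq_sq hsq
  refine ⟨toReal d, inO_toReal d, ?_⟩
  rw [hconj, hN, ← map_pow, ← map_mul, setOf_eq_image_span, setOf_eq_image_span,
    setOf_eq_image_span, ← Set.image_inter toReal_injective, ← Submodule.coe_inf,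
    span_singleton_inf_span_singleton, Ideal.span_singleton_eq_span_singleton.mpr hd]
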